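/- With indices i1 ∈ I1, j2, k2 ∈ I2, j3, k3, ℓ3 ∈ I3, ℓ4, k4 ∈ I4: (a) e_{i1 j2} ∧ e_{k2 ℓ4} ∈ Im(d3) whenever j2 ≠ k2; (b) e_{i1 j3} ∧ e_{k3 ℓ4} ∈ Im(d3) whenever j3 ≠ k3; and (c) every element of the form Σ_{j2 ∈ I2} α_{j2} (e_{i1 j2} ∧ e_{j2 k4}) + Σ_{j3 ∈ I3} β_{j3} (e_{i1 j3} ∧ e_{j3 k4}) with Σ_{j2} α_{j2} + Σ_{j3} β_{j3} = 0 lies in Im(d3). -/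

import Mathlib

attribute [local instance 100] LieRing.ofAssociativeRing

/-- Index type with four consecutive blocks of sizes `n 0, n 1, n 2, n 3`
(corresponding to the partition `I1 ⊔ I2 ⊔ I3 ⊔ I4` of `{1, …, N}`). -/
abbrev BIdx (n : Fin 4 → ℕ) := Σ a : Fin 4, Fin (n a)

/-- The Lie algebra `𝔲` of strictly block upper triangular matrices. -/
def uLie (n : Fin 4 → ℕ) (K : Type*) [Field K] :
    LieSubalgebra K (Matrix (BIdx n) (BIdx n) K) where
  carrier := {M | ∀ (a b : Fin 4) (i : Fin (n a)) (j : Fin (n b)), b ≤ a → M ⟨a, i⟩ ⟨b, j⟩ = 0}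
  add_mem' := by
    intro x y hx hy a b i j h
    simp [Matrix.add_apply, hx a b i j h, hy a b i j h]
  zero_mem' := by intro a b i j h; simp
  smul_mem' := by
    intro c x hx a b i j h
    simp [Matrix.smul_apply, hx a b i j h]
  lie_mem' := by
    intro x y hx hy a b i j h
    have key : ∀ u v : Matrix (BIdx n) (BIdx n) K,
        (∀ (a b : Fin 4) (i : Fin (n a)) (j : Fin (n b)), b ≤ a → u ⟨a, i⟩ ⟨b, j⟩ = 0) →
        (∀ (a b : Fin 4) (i : Fin (n a)) (j : Fin (n b)), b ≤ a → v ⟨a, i⟩ ⟨b, j⟩ = 0) →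
        (u * v) ⟨a, i⟩ ⟨b, j⟩ = 0 := by
      intro u v hu hv
      rw [Matrix.mul_apply]
      apply Finset.sum_eq_zero
      rintro ⟨c, kk⟩ -
      by_cases hc : c ≤ a
      · rw [hu a c i kk hc, zero_mul]
      · rw [hv c b kk j (h.trans (le_of_not_ge hc)), mul_zero]
    rw [Ring.lie_def, Matrix.sub_apply, key x y hx hy, key y x hy hx, sub_zero]

/-- The type of elements of `𝔲`. -/
abbrev UU (n : Fin 4 → ℕ) (K : Type*) [Field K] := ↥(uLie n K)

/-- `x ∧ y`, as an element of the second exterior power `⋀[K]^2 𝔲`. -/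
noncomputable def wedge {n : Fin 4 → ℕ} {K : Type*} [Field K] (x y : UU n K) :
    ↥(⋀[K]^2 (UU n K)) :=
  ⟨ExteriorAlgebra.ιMulti K 2 ![x, y], ExteriorAlgebra.ιMulti_range K 2 ⟨![x, y], rfl⟩⟩

/-- `x` is supported on the `(a, b)` block. -/
def inBlock {n : Fin 4 → ℕ} {K : Type*} [Field K] (a b : Fin 4) (x : UU n K) : Prop :=
  ∀ (c d : Fin 4) (i : Fin (n c)) (j : Fin (n d)), ¬(c = a ∧ d = b) →
    (x : Matrix (BIdx n) (BIdx n) K) ⟨c, i⟩ ⟨d, j⟩ = 0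

/-- The image of the Chevalley–Eilenberg differential `d3 : Λ³𝔲 → Λ²𝔲`: the span of all
`z ∧ [x,y] + y ∧ [z,x] + x ∧ [y,z]`. -/
noncomputable def Imd3 (n : Fin 4 → ℕ) (K : Type*) [Field K] :
    Submodule K ↥(⋀[K]^2 (UU n K)) :=
  Submodule.span K
    {w | ∃ x y z : UU n K, w = wedge z ⁅x, y⁆ + wedge y ⁅z, x⁆ + wedge x ⁅y, z⁆}

/-- The matrix unit `e_{x y}` for `x` in block `a`, `y` in block `b`, `a < b`, as an
element of `𝔲`. -/
def eU {n : Fin 4 → ℕ} {K : Type*} [Field K] (a b : Fin 4) (h : a < b)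
    (i : Fin (n a)) (j : Fin (n b)) : UU n K :=
  ⟨Matrix.single ⟨a, i⟩ ⟨b, j⟩ 1, by
    intro c d k l hdc
    rw [Matrix.single, Matrix.of_apply, if_neg]
    rintro ⟨h1, h2⟩
    have hac : a = c := congrArg Sigma.fst h1
    have hbd : b = d := congrArg Sigma.fst h2
    rw [← hac, ← hbd] at hdc
    exact absurd hdc (not_le.mpr h)⟩

variable {n : Fin 4 → ℕ} {K : Type*} [Field K]

/-- The matrix unit `e_{i1 j2}` (blocks `I1 → I2`, i.e. `(0,1)`). -/
def e01 (i : Fin (n 0)) (j : Fin (n 1)) : UU n K := eU 0 1 (by decide) i j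

/-- The matrix unit `e_{i1 j3}` (blocks `I1 → I3`, i.e. `(0,2)`). -/
def e02 (i : Fin (n 0)) (j : Fin (n 2)) : UU n K := eU 0 2 (by decide) i j

/-- The matrix unit `e_{i1 j4}` (blocks `I1 → I4`, i.e. `(0,3)`). -/
def e03 (i : Fin (n 0)) (j : Fin (n 3)) : UU n K := eU 0 3 (by decide) i j

/-- The matrix unit `e_{i2 j3}` (blocks `I2 → I3`, i.e. `(1,2)`). -/
def e12 (i : Fin (n 1)) (j : Fin (n 2)) : UU n K := eU 1 2 (by decide) i j

/-- The matrix unit `e_{i2 j4}` (blocks `I2 → I4`, i.e. `(1,3)`). -/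
def e13 (i : Fin (n 1)) (j : Fin (n 3)) : UU n K := eU 1 3 (by decide) i j

/-- The matrix unit `e_{i3 j4}` (blocks `I3 → I4`, i.e. `(2,3)`). -/
def e23 (i : Fin (n 2)) (j : Fin (n 3)) : UU n K := eU 2 3 (by decide) i j

/-!
Every membership comes from one generator `z ∧ [x,y] + y ∧ [z,x] + x ∧ [y,z]` of `Im(d3)` built
from matrix units with `[z,x] = 0`. For (a) and (b) a second bracket vanishes as well, because the
indices do not chain, so the generator is `± e_{i j} ∧ e_{k l}` itself, routed through an index of
the remaining middle block. For (c), `x = e_{i j₂}`, `y = e_{j₂ j₃}`, `z = e_{j₃ k}` show that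
`e_{i j₂} ∧ e_{j₂ k} ≡ e_{i j₃} ∧ e_{j₃ k}` modulo `Im(d3)`; all wedges of the sum are therefore
congruent to one another, and a combination of them with coefficient sum zero lies in `Im(d3)`.
-/

lemma Submodule.sum_smul_mem_of_sub_mem {R M ι : Type*} [Ring R] [AddCommGroup M]
    [Module R M] [Fintype ι] (S : Submodule R M) {v : ι → M} {c : M}
    (hv : ∀ i, v i - c ∈ S) {α : ι → R} (hα : ∑ i, α i = 0) : ∑ i, α i • v i ∈ S := by
  have hdecomp : ∑ i, α i • v i = ∑ i, α i • (v i - c) + (∑ i, α i) • c := by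
    simp only [smul_sub, Finset.sum_sub_distrib, Finset.sum_smul, sub_add_cancel]
  rw [hdecomp, hα, zero_smul, add_zero]
  exact Submodule.sum_mem S fun i _ => S.smul_mem (α i) (hv i)

lemma BIdx.mk_ne_of_fst_ne {a b : Fin 4} (h : a ≠ b) (i : Fin (n a)) (j : Fin (n b)) :
    (⟨a, i⟩ : BIdx n) ≠ ⟨b, j⟩ :=
  fun e => h (congrArg Sigma.fst e)

lemma BIdx.mk_ne_of_snd_ne {a : Fin 4} {i j : Fin (n a)} (h : i ≠ j) :
    (⟨a, i⟩ : BIdx n) ≠ ⟨a, j⟩ :=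
  fun e => h (by simpa using e)

lemma coe_eU {a b : Fin 4} (h : a < b) (i : Fin (n a)) (j : Fin (n b)) :
    ((eU a b h i j : UU n K) : Matrix (BIdx n) (BIdx n) K) = Matrix.single ⟨a, i⟩ ⟨b, j⟩ 1 :=
  rfl

lemma lie_eU_eU {a b c : Fin 4} (hab : a < b) (hbc : b < c) (i : Fin (n a)) (j : Fin (n b))
    (k : Fin (n c)) :
    ⁅(eU a b hab i j : UU n K), eU b c hbc j k⁆ = (eU a c (hab.trans hbc) i k : UU n K) := by
  apply Subtype.ext
  rw [LieSubalgebra.coe_bracket, Ring.lie_def, coe_eU, coe_eU, coe_eU,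
    Matrix.single_mul_single_same, one_mul,
    Matrix.single_mul_single_of_ne (h := BIdx.mk_ne_of_fst_ne (hab.trans hbc).ne' _ _), sub_zero]

lemma lie_eU_eU_of_ne {a b c d : Fin 4} (hab : a < b) (hcd : c < d) (i : Fin (n a))
    (j : Fin (n b)) (k : Fin (n c)) (l : Fin (n d)) (hjk : (⟨b, j⟩ : BIdx n) ≠ ⟨c, k⟩)
    (hli : (⟨d, l⟩ : BIdx n) ≠ ⟨a, i⟩) :
    ⁅(eU a b hab i j : UU n K), eU c d hcd k l⁆ = (0 : UU n K) := by
  apply Subtype.ext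
  rw [LieSubalgebra.coe_bracket, Ring.lie_def, coe_eU, coe_eU, ZeroMemClass.coe_zero,
    Matrix.single_mul_single_of_ne (h := hjk), Matrix.single_mul_single_of_ne (h := hli), sub_zero]

lemma lie_e01_e12 (i : Fin (n 0)) (j : Fin (n 1)) (m : Fin (n 2)) :
    ⁅(e01 i j : UU n K), e12 j m⁆ = (e02 i m : UU n K) :=
  lie_eU_eU _ _ i j m

lemma lie_e12_e23 (j : Fin (n 1)) (m : Fin (n 2)) (l : Fin (n 3)) :
    ⁅(e12 j m : UU n K), e23 m l⁆ = (e13 j l : UU n K) :=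
  lie_eU_eU _ _ j m l

lemma lie_e01_e12_of_ne (i : Fin (n 0)) {j k : Fin (n 1)} (hjk : j ≠ k) (m : Fin (n 2)) :
    ⁅(e01 i j : UU n K), e12 k m⁆ = (0 : UU n K) :=
  lie_eU_eU_of_ne _ _ i j k m (BIdx.mk_ne_of_snd_ne hjk) (BIdx.mk_ne_of_fst_ne (by decide) _ _)

lemma lie_e12_e23_of_ne (j : Fin (n 1)) {m k : Fin (n 2)} (hmk : m ≠ k) (l : Fin (n 3)) :
    ⁅(e12 j m : UU n K), e23 k l⁆ = (0 : UU n K) :=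
  lie_eU_eU_of_ne _ _ j m k l (BIdx.mk_ne_of_snd_ne hmk) (BIdx.mk_ne_of_fst_ne (by decide) _ _)

lemma lie_e23_e01 (m : Fin (n 2)) (l : Fin (n 3)) (i : Fin (n 0)) (j : Fin (n 1)) :
    ⁅(e23 m l : UU n K), e01 i j⁆ = (0 : UU n K) :=
  lie_eU_eU_of_ne _ _ m l i j (BIdx.mk_ne_of_fst_ne (by decide) _ _)
    (BIdx.mk_ne_of_fst_ne (by decide) _ _)

lemma wedge_zero_right (x : UU n K) : wedge x 0 = 0 :=
  Subtype.ext <| (ExteriorAlgebra.ιMulti K 2).map_coord_zero 1 rfl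

lemma wedge_swap (x y : UU n K) : wedge x y = -wedge y x := by
  apply Subtype.ext
  have hswap : ![x, y] = ![y, x] ∘ Equiv.swap (0 : Fin 2) 1 := by
    funext i
    fin_cases i <;> rfl
  change ExteriorAlgebra.ιMulti K 2 ![x, y] = -ExteriorAlgebra.ιMulti K 2 ![y, x]
  rw [hswap]
  exact (ExteriorAlgebra.ιMulti K 2).map_swap ![y, x] (by decide : (0 : Fin 2) ≠ 1)

lemma wedge_mem_Imd3_comm {x y : UU n K} : wedge x y ∈ Imd3 n K ↔ wedge y x ∈ Imd3 n K := by
  rw [wedge_swap, neg_mem_iff]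

lemma wedge_add_wedge_mem_Imd3 {x y z : UU n K} (hzx : ⁅z, x⁆ = 0) :
    wedge z ⁅x, y⁆ + wedge x ⁅y, z⁆ ∈ Imd3 n K := by
  have hgen : wedge z ⁅x, y⁆ + wedge y ⁅z, x⁆ + wedge x ⁅y, z⁆ ∈ Imd3 n K :=
    Submodule.subset_span ⟨x, y, z, rfl⟩
  rwa [hzx, wedge_zero_right, add_zero] at hgen

lemma wedge_mem_Imd3 {x y z : UU n K} (hzx : ⁅z, x⁆ = 0) (hyz : ⁅y, z⁆ = 0) :
    wedge z ⁅x, y⁆ ∈ Imd3 n K := by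
  simpa only [hyz, wedge_zero_right, add_zero] using wedge_add_wedge_mem_Imd3 (y := y) hzx

lemma wedge_e01_e13_mem_Imd3 (hn : 0 < n 2) (i : Fin (n 0)) {j k : Fin (n 1)} (hjk : j ≠ k)
    (l : Fin (n 3)) : wedge (e01 i j : UU n K) (e13 k l) ∈ Imd3 n K := by
  let m : Fin (n 2) := ⟨0, hn⟩
  rw [← lie_e12_e23 k m l]
  exact wedge_mem_Imd3 (lie_e01_e12_of_ne i hjk m) (lie_e23_e01 m l i j)

lemma wedge_e02_e23_mem_Imd3 (hn : 0 < n 1) (i : Fin (n 0)) {j k : Fin (n 2)} (hjk : j ≠ k)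
    (l : Fin (n 3)) : wedge (e02 i j : UU n K) (e23 k l) ∈ Imd3 n K := by
  let m : Fin (n 1) := ⟨0, hn⟩
  rw [wedge_mem_Imd3_comm, ← lie_e01_e12 i m j]
  exact wedge_mem_Imd3 (lie_e23_e01 k l i m) (lie_e12_e23_of_ne m hjk l)

lemma wedge_e01_e13_sub_wedge_e02_e23_mem_Imd3 (i : Fin (n 0)) (j : Fin (n 1)) (m : Fin (n 2))
    (l : Fin (n 3)) :
    wedge (e01 i j : UU n K) (e13 j l) - wedge (e02 i m) (e23 m l) ∈ Imd3 n K := by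
  have h := wedge_add_wedge_mem_Imd3 (y := (e12 j m : UU n K)) (lie_e23_e01 m l i j)
  rwa [lie_e01_e12, lie_e12_e23, wedge_swap, add_comm, ← sub_eq_add_neg] at h

lemma sum_wedge_mem_Imd3 (hn1 : 0 < n 1) (hn2 : 0 < n 2) (i : Fin (n 0)) (l : Fin (n 3))
    {α : Fin (n 1) → K} {β : Fin (n 2) → K} (hsum : ∑ j, α j + ∑ m, β m = 0) :
    ∑ j, α j • wedge (e01 i j : UU n K) (e13 j l) + ∑ m, β m • wedge (e02 i m) (e23 m l)
      ∈ Imd3 n K := by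
  let j₀ : Fin (n 1) := ⟨0, hn1⟩
  let m₀ : Fin (n 2) := ⟨0, hn2⟩
  let A : Fin (n 1) → ↥(⋀[K]^2 (UU n K)) := fun j => wedge (e01 i j) (e13 j l)
  let B : Fin (n 2) → ↥(⋀[K]^2 (UU n K)) := fun m => wedge (e02 i m) (e23 m l)
  have hA : ∀ j, A j - B m₀ ∈ Imd3 n K := fun j =>
    wedge_e01_e13_sub_wedge_e02_e23_mem_Imd3 i j m₀ l
  have hB : ∀ m, B m - B m₀ ∈ Imd3 n K := fun m => by
    have h : A j₀ - B m ∈ Imd3 n K := wedge_e01_e13_sub_wedge_e02_e23_mem_Imd3 i j₀ m l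
    simpa only [sub_sub_sub_cancel_left] using sub_mem (hA j₀) h
  have h := (Imd3 n K).sum_smul_mem_of_sub_mem (v := Sum.elim A B) (α := Sum.elim α β)
    (Sum.rec hA hB) (by rwa [Fintype.sum_sum_type])
  simpa only [Fintype.sum_sum_type, Sum.elim_inl, Sum.elim_inr] using h

theorem stmt_16_general (n : Fin 4 → ℕ) (h1 : 3 ≤ n 1) (h2 : 3 ≤ n 2)
    (K : Type*) [Field K] :
    (∀ (i : Fin (n 0)) (j k : Fin (n 1)) (l : Fin (n 3)), j ≠ k →
      wedge (e01 (K := K) i j) (e13 k l) ∈ Imd3 n K) ∧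
    (∀ (i : Fin (n 0)) (j k : Fin (n 2)) (l : Fin (n 3)), j ≠ k →
      wedge (e02 (K := K) i j) (e23 k l) ∈ Imd3 n K) ∧
    (∀ (i : Fin (n 0)) (kk : Fin (n 3)) (α : Fin (n 1) → K) (β : Fin (n 2) → K),
      (∑ j, α j) + (∑ j, β j) = 0 →
      ((∑ j, α j • wedge (e01 (K := K) i j) (e13 j kk)) +
        ∑ j, β j • wedge (e02 (K := K) i j) (e23 j kk)) ∈ Imd3 n K) :=
  ⟨fun i _ _ l hjk => wedge_e01_e13_mem_Imd3 (by omega) i hjk l,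
    fun i _ _ l hjk => wedge_e02_e23_mem_Imd3 (by omega) i hjk l,
    fun i l _ _ hsum => sum_wedge_mem_Imd3 (by omega) (by omega) i l hsum⟩

/-- (a) `e_{i1 j2} ∧ e_{k2 ℓ4} ∈ Im(d3)` whenever `j2 ≠ k2`; (b) `e_{i1 j3} ∧ e_{k3 ℓ4}
∈ Im(d3)` whenever `j3 ≠ k3`; (c) every `Σ_{j2} α_{j2} (e_{i1 j2} ∧ e_{j2 k4}) +
Σ_{j3} β_{j3} (e_{i1 j3} ∧ e_{j3 k4})` with `Σ α + Σ β = 0` lies in `Im(d3)`. -/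
theorem stmt_16 (n : Fin 4 → ℕ) (h0 : 1 ≤ n 0) (h1 : 3 ≤ n 1) (h2 : 3 ≤ n 2)
    (h3 : 1 ≤ n 3) (K : Type*) [Field K] :
    (∀ (i : Fin (n 0)) (j k : Fin (n 1)) (l : Fin (n 3)), j ≠ k →
      wedge (e01 (K := K) i j) (e13 k l) ∈ Imd3 n K) ∧
    (∀ (i : Fin (n 0)) (j k : Fin (n 2)) (l : Fin (n 3)), j ≠ k →
      wedge (e02 (K := K) i j) (e23 k l) ∈ Imd3 n K) ∧
    (∀ (i : Fin (n 0)) (kk : Fin (n 3)) (α : Fin (n 1) → K) (β : Fin (n 2) → K),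
      (∑ j, α j) + (∑ j, β j) = 0 →
      ((∑ j, α j • wedge (e01 (K := K) i j) (e13 j kk)) +
        ∑ j, β j • wedge (e02 (K := K) i j) (e23 j kk)) ∈ Imd3 n K) :=
  stmt_16_general n h1 h2 K
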